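/- The domination number of the Knödel graph W_{4,36} is 8. -/

import Mathlib

/-- The Knödel graph `W_{Δ,n}` with `m = n/2`: bipartite graph on `U ⊕ V`,
where `u_i` (as `Sum.inl i`, indices mod `m`) is adjacent to `v_j` (`Sum.inr j`)
iff `j ≡ i + 2^k - 1 (mod m)` for some `k < Δ`. -/
def knodel (Δ m : ℕ) : SimpleGraph (ZMod m ⊕ ZMod m) where
  Adj x y := match x, y with
    | Sum.inl i, Sum.inr j => ∃ k, k < Δ ∧ j = i + 2 ^ k - 1
    | Sum.inr j, Sum.inl i => ∃ k, k < Δ ∧ j = i + 2 ^ k - 1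
    | _, _ => False
  symm := ⟨by rintro (i | i) (j | j) h <;> exact h⟩
  loopless := ⟨by rintro (i | i) h <;> exact h⟩

/-- `D` is a dominating set of `G`: every vertex not in `D` has a neighbor in `D`. -/
def IsDominatingSet {V : Type*} (G : SimpleGraph V) (D : Set V) : Prop :=
  ∀ v ∉ D, ∃ u ∈ D, G.Adj u v

/-- The domination number: minimum cardinality of a (finite) dominating set. -/
noncomputable def dominationNumber {V : Type*} (G : SimpleGraph V) : ℕ :=
  sInf {k | ∃ D : Set V, D.Finite ∧ D.ncard = k ∧ IsDominatingSet G D}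

/-- Index-distance of `u_i` and `u_j`: `min(|i-j|, m - |i-j|)`. -/
def idDist (m i j : ℕ) : ℕ :=
  min ((i : ℤ) - (j : ℤ)).natAbs (m - ((i : ℤ) - (j : ℤ)).natAbs)

/-- `M_Δ = {2^a - 2^b : 0 ≤ b < a < Δ}`. -/
def Mset (Δ : ℕ) : Set ℕ := {d | ∃ a b : ℕ, b < a ∧ a < Δ ∧ d = 2 ^ a - 2 ^ b}

/-!
The closed neighbourhood of a vertex of `W_{4,36}` has at most `4 + 1 = 5` vertices, so a
dominating set `D` covers at most `5 |D|` of the `36` vertices; hence `|D| ≥ ⌈36/5⌉ = 8`.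
Conversely `{u₀, u₁, u₉, u₁₀, v₅, v₆, v₁₄, v₁₅}` dominates, the pattern `{u₀, u₁, v₅, v₆}`
repeated with period `9`.
-/

section Domination

variable {V : Type*} (G : SimpleGraph V)

theorem dominationNumber_le_ncard {D : Set V} (hfin : D.Finite) (hD : IsDominatingSet G D) :
    dominationNumber G ≤ D.ncard :=
  Nat.sInf_le ⟨D, hfin, rfl, hD⟩

theorem le_dominationNumber [Finite V] {k : ℕ}
    (h : ∀ D : Set V, IsDominatingSet G D → k ≤ D.ncard) : k ≤ dominationNumber G := by
  have huniv : IsDominatingSet G Set.univ := fun v hv => absurd (Set.mem_univ v) hv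
  refine le_csInf ⟨_, Set.univ, Set.toFinite _, rfl, huniv⟩ ?_
  rintro _ ⟨D, -, rfl, hD⟩
  exact h D hD

theorem card_le_succ_maxDegree_mul_ncard [Fintype V] [DecidableRel G.Adj] {D : Set V}
    (hD : IsDominatingSet G D) : Fintype.card V ≤ (G.maxDegree + 1) * D.ncard := by
  classical
  obtain ⟨s, rfl⟩ := D.toFinite.exists_finset_coe
  have hcover : (Finset.univ : Finset V) ⊆ s.biUnion fun u => insert u (G.neighborFinset u) := by
    intro v _
    rw [Finset.mem_biUnion]
    by_cases hv : v ∈ s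
    · exact ⟨v, hv, Finset.mem_insert_self v _⟩
    · obtain ⟨u, hu, huv⟩ := hD v hv
      exact ⟨u, hu, Finset.mem_insert_of_mem ((G.mem_neighborFinset u v).2 huv)⟩
  calc Fintype.card V
      ≤ (s.biUnion fun u => insert u (G.neighborFinset u)).card := Finset.card_le_card hcover
    _ ≤ ∑ u ∈ s, (insert u (G.neighborFinset u)).card := Finset.card_biUnion_le
    _ ≤ ∑ _u ∈ s, (G.maxDegree + 1) := Finset.sum_le_sum fun u _ =>
        (Finset.card_insert_le _ _).trans (Nat.succ_le_succ (G.degree_le_maxDegree u))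
    _ = (G.maxDegree + 1) * (s : Set V).ncard := by
        rw [Finset.sum_const, smul_eq_mul, Set.ncard_coe_finset, mul_comm]

end Domination

section Knodel

variable (Δ m : ℕ)

instance knodel.decidableAdj : DecidableRel (knodel Δ m).Adj
  | Sum.inl i, Sum.inr j => inferInstanceAs (Decidable (∃ k, k < Δ ∧ j = i + 2 ^ k - 1))
  | Sum.inr j, Sum.inl i => inferInstanceAs (Decidable (∃ k, k < Δ ∧ j = i + 2 ^ k - 1))
  | Sum.inl _, Sum.inl _ => isFalse id
  | Sum.inr _, Sum.inr _ => isFalse id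

theorem knodel_maxDegree_le [NeZero m] : (knodel Δ m).maxDegree ≤ Δ := by
  refine SimpleGraph.maxDegree_le_of_forall_degree_le _ _ fun v => ?_
  obtain ⟨f, hf⟩ : ∃ f : ℕ → ZMod m ⊕ ZMod m,
      (knodel Δ m).neighborFinset v ⊆ (Finset.range Δ).image f := by
    rcases v with i | j
    · refine ⟨fun k => Sum.inr (i + 2 ^ k - 1), ?_⟩
      rintro (_ | j) h
      · exact ((SimpleGraph.mem_neighborFinset _ _ _).1 h).elim
      · obtain ⟨k, hk, rfl⟩ := (SimpleGraph.mem_neighborFinset _ _ _).1 h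
        exact Finset.mem_image.2 ⟨k, Finset.mem_range.2 hk, rfl⟩
    · refine ⟨fun k => Sum.inl (j - 2 ^ k + 1), ?_⟩
      rintro (i | _) h
      · obtain ⟨k, hk, rfl⟩ := (SimpleGraph.mem_neighborFinset _ _ _).1 h
        exact Finset.mem_image.2 ⟨k, Finset.mem_range.2 hk, congrArg Sum.inl (by ring)⟩
      · exact ((SimpleGraph.mem_neighborFinset _ _ _).1 h).elim
  calc (knodel Δ m).degree v = ((knodel Δ m).neighborFinset v).card :=
        ((knodel Δ m).card_neighborFinset_eq_degree v).symm
    _ ≤ ((Finset.range Δ).image f).card := Finset.card_le_card hf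
    _ ≤ Δ := Finset.card_image_le.trans (Finset.card_range Δ).le

end Knodel

theorem knodel_4_18_isDominatingSet :
    IsDominatingSet (knodel 4 18) ↑({Sum.inl 0, Sum.inl 1, Sum.inl 9, Sum.inl 10,
      Sum.inr 5, Sum.inr 6, Sum.inr 14, Sum.inr 15} : Finset (ZMod 18 ⊕ ZMod 18)) := by
  simp only [IsDominatingSet, Finset.mem_coe]
  decide

theorem domination_knodel_36 : dominationNumber (knodel 4 18) = 8 := by
  refine le_antisymm ?_ (le_dominationNumber _ fun D hD => ?_)
  · calc dominationNumber (knodel 4 18)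
        ≤ _ := dominationNumber_le_ncard _ (Finset.finite_toSet _) knodel_4_18_isDominatingSet
      _ = 8 := by rw [Set.ncard_coe_finset]; decide
  · have hcover : 36 ≤ 5 * D.ncard := by
      have h := card_le_succ_maxDegree_mul_ncard _ hD
      rw [Fintype.card_sum, ZMod.card] at h
      exact h.trans (Nat.mul_le_mul_right _ (Nat.succ_le_succ (knodel_maxDegree_le 4 18)))
    omega
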